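/- Let M be analytic with M(0) invertible, Λ ∈ ℂ^{p×p} invertible with σ(Λ) ⊂ Ω, and Y ∈ ℂ^{n×p}. Then (Ψ, Λ^{-1}) with Ψ(θ) := Y exp(θΛ) is an invariant pair of the operator 𝓑, i.e., (𝓑Ψ)(θ) = Ψ(θ)Λ^{-1} for all θ, if and only if 𝕄(Y, Λ) = 0. -/

import Mathlib

open NormedSpace
open scoped Matrix

/-!
Since `∫₀^θ Y exp(sΛ) ds = (Y exp(θΛ) - Y) Λ⁻¹`, the invariance equation for `Ψ(θ) = Y exp(θΛ)`
holds for every `θ` iff it holds at `θ = 0`, i.e. iff `S := Σ Bᵢ Y Λ^i` equals `Y Λ⁻¹`.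
Multiplying `S` by `M(0)` on the left and by `Λ` on the right and using `M(0) Bᵢ = -Aᵢ₊₁`
turns it into minus the tail of `𝕄(Y, Λ)`, so `𝕄(Y, Λ) = M(0) (Y - S Λ)`; as `M(0)` and `Λ`
are invertible, this vanishes iff `S = Y Λ⁻¹`.
-/

/-- `𝕄(Y,Λ) = Σ_i A_i Y Λ^i` where `A_i = M^{(i)}(0)/i!` are the Taylor
coefficients of the analytic matrix function `M`. -/
noncomputable def MMfun {n p : ℕ} (A : ℕ → Matrix (Fin n) (Fin n) ℂ)
    (Y : Matrix (Fin n) (Fin p) ℂ) (Λ : Matrix (Fin p) (Fin p) ℂ) :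
    Matrix (Fin n) (Fin p) ℂ :=
  ∑' i : ℕ, A i * Y * Λ ^ i

section HasSum

variable {ι R l m n : Type*} [Fintype m] [NonUnitalNonAssocSemiring R] [TopologicalSpace R]
  [IsTopologicalSemiring R]

theorem HasSum.matrix_mul_left {f : ι → Matrix m n R} {S : Matrix m n R} (C : Matrix l m R)
    (hf : HasSum f S) : HasSum (fun i => C * f i) (C * S) :=
  hf.map (Matrix.addMonoidHomMulLeft C) (continuous_const.matrix_mul continuous_id)

theorem HasSum.matrix_mul_right {f : ι → Matrix l m R} {S : Matrix l m R} (C : Matrix m n R)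
    (hf : HasSum f S) : HasSum (fun i => f i * C) (S * C) :=
  hf.map (Matrix.addMonoidHomMulRight C) (continuous_id.matrix_mul continuous_const)

end HasSum

theorem MMfun_eq_mul_sub {n p : ℕ} {A Bc : ℕ → Matrix (Fin n) (Fin n) ℂ}
    {Y S : Matrix (Fin n) (Fin p) ℂ} {Λ : Matrix (Fin p) (Fin p) ℂ}
    (hBc : ∀ i : ℕ, A 0 * Bc i = -(A (i + 1)))
    (hS : HasSum (fun i : ℕ => Bc i * (Y * Λ ^ i)) S)
    (hsumM : Summable fun i : ℕ => A i * Y * Λ ^ i) :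
    MMfun A Y Λ = A 0 * (Y - S * Λ) := by
  have hterm (i : ℕ) : A (i + 1) * Y * Λ ^ (i + 1) = -(A 0 * (Bc i * (Y * Λ ^ i)) * Λ) := by
    rw [← Matrix.mul_assoc, hBc, pow_succ]
    simp only [Matrix.neg_mul, neg_neg, Matrix.mul_assoc]
  have htail : HasSum (fun i : ℕ => A (i + 1) * Y * Λ ^ (i + 1)) (-(A 0 * S * Λ)) := by
    simp_rw [hterm]
    exact ((hS.matrix_mul_left (A 0)).matrix_mul_right Λ).neg
  have hshift := (hasSum_nat_add_iff' 1).2 hsumM.hasSum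
  rw [Finset.sum_range_one, pow_zero, Matrix.mul_one] at hshift
  have h := htail.unique hshift
  rw [neg_eq_iff_eq_neg, neg_sub] at h
  rw [Matrix.mul_sub, ← Matrix.mul_assoc, h, sub_sub_cancel, MMfun]

namespace Matrix

variable {l m : Type*} [Fintype m] [DecidableEq m]

section MatrixExp

-- Any algebra norm would do: the statements below only involve the product topology.
attribute [local instance] Matrix.linftyOpNormedRing Matrix.linftyOpNormedAlgebra

theorem hasDerivAt_exp_ofReal_smul (Λ : Matrix m m ℂ) (t : ℝ) :
    HasDerivAt (fun s : ℝ => exp ((s : ℂ) • Λ)) (exp ((t : ℂ) • Λ) * Λ) t := by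
  have h := hasDerivAt_exp_smul_const (𝕂 := ℝ) Λ t
  simp only [← Complex.coe_smul] at h
  exact h

theorem continuous_exp_ofReal_smul (Λ : Matrix m m ℂ) :
    Continuous fun s : ℝ => exp ((s : ℂ) • Λ) :=
  continuous_iff_continuousAt.2 fun t => (hasDerivAt_exp_ofReal_smul Λ t).continuousAt

theorem integral_mul_exp_ofReal_smul_apply (Y : Matrix l m ℂ) {Λ : Matrix m m ℂ}
    (hΛ : IsUnit Λ) (θ : ℝ) (a : l) (b : m) :
    ∫ s in (0 : ℝ)..θ, (Y * exp ((s : ℂ) • Λ)) a b =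
      ((Y * exp ((θ : ℂ) • Λ) - Y) * Λ⁻¹) a b := by
  let L : Matrix m m ℂ →L[ℝ] ℂ := LinearMap.toContinuousLinearMap
    (entryLinearMap ℝ ℂ a b ∘ₗ mulRightLinearMap l ℝ Λ⁻¹ ∘ₗ mulLeftLinearMap m ℝ Y)
  have hderiv (s : ℝ) : HasDerivAt (fun s : ℝ => (Y * exp ((s : ℂ) • Λ) * Λ⁻¹) a b)
      ((Y * exp ((s : ℂ) • Λ)) a b) s := by
    refine (L.hasFDerivAt.comp_hasDerivAt s (hasDerivAt_exp_ofReal_smul Λ s)).congr_deriv ?_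
    change (Y * (exp ((s : ℂ) • Λ) * Λ) * Λ⁻¹) a b = _
    rw [Matrix.mul_assoc, Matrix.mul_assoc, mul_nonsing_inv _ ((isUnit_iff_isUnit_det Λ).1 hΛ),
      Matrix.mul_one]
  have hcont : Continuous fun s : ℝ => (Y * exp ((s : ℂ) • Λ)) a b :=
    (continuous_const.matrix_mul (continuous_exp_ofReal_smul Λ)).matrix_elem a b
  rw [intervalIntegral.integral_eq_sub_of_hasDerivAt (fun s _ => hderiv s)
    (hcont.intervalIntegrable 0 θ)]
  simp [Matrix.sub_mul]

end MatrixExp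

theorem forall_integral_mul_exp_add_eq_iff (Y S : Matrix l m ℂ) {Λ : Matrix m m ℂ}
    (hΛ : IsUnit Λ) :
    (∀ (θ : ℝ) (a : l) (b : m),
        (∫ s in (0:ℝ)..θ, (Y * exp ((s : ℂ) • Λ)) a b) + S a b =
          ((Y * exp ((θ : ℂ) • Λ)) * Λ⁻¹) a b) ↔
      S = Y * Λ⁻¹ := by
  have hentry (θ : ℝ) (a : l) (b : m) :
      (∫ s in (0:ℝ)..θ, (Y * exp ((s : ℂ) • Λ)) a b) + S a b =
          ((Y * exp ((θ : ℂ) • Λ)) * Λ⁻¹) a b ↔ S a b = (Y * Λ⁻¹) a b := by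
    rw [integral_mul_exp_ofReal_smul_apply Y hΛ, Matrix.sub_mul, Matrix.sub_apply]
    constructor <;> intro h <;> linear_combination h
  simp only [hentry, forall_const, Matrix.ext_iff]

end Matrix

/-- Theorem 2.2: let `M(λ) = Σ_i λ^i A_i` be analytic with
`M(0) = A 0` invertible, `Λ` invertible, `Y ∈ ℂ^{n×p}`, and let
`B(λ) = M(0)⁻¹(M(0)−M(λ))/λ` have Taylor coefficients `Bc i`
(`M(0)·Bc i = −A_{i+1}`).  Then `(Ψ, Λ⁻¹)` with `Ψ(θ) = Y exp(θΛ)` is an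
invariant pair of `𝓑`, i.e. `(𝓑Ψ)(θ) = Ψ(θ)Λ⁻¹` for all `θ`
(with `(𝓑Ψ)(θ) = ∫₀^θ Ψ + Σ_i Bc i · Y Λ^i` acting columnwise/entrywise),
if and only if `𝕄(Y,Λ) = 0`. -/
theorem stmt9 {n p : ℕ} (A Bc : ℕ → Matrix (Fin n) (Fin n) ℂ)
    (Y : Matrix (Fin n) (Fin p) ℂ) (Λ : Matrix (Fin p) (Fin p) ℂ)
    (hΛ : IsUnit Λ) (hM0 : IsUnit (A 0))
    (hBc : ∀ i : ℕ, A 0 * Bc i = -(A (i + 1)))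
    (hsumB : Summable fun i : ℕ => Bc i * (Y * Λ ^ i))
    (hsumM : Summable fun i : ℕ => A i * Y * Λ ^ i) :
    (∀ (θ : ℝ) (a : Fin n) (b : Fin p),
        (∫ s in (0:ℝ)..θ, (Y * exp ((s : ℂ) • Λ)) a b) +
            (∑' i : ℕ, Bc i * (Y * Λ ^ i)) a b =
          ((Y * exp ((θ : ℂ) • Λ)) * Λ⁻¹) a b) ↔
      MMfun A Y Λ = 0 := by
  obtain ⟨S, hS⟩ := hsumB
  let _ := hΛ.invertible
  let _ := hM0.invertible
  have hA0_mul_eq_zero (X : Matrix (Fin n) (Fin p) ℂ) : A 0 * X = 0 ↔ X = 0 :=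
    ⟨fun h => by rw [← Matrix.inv_mul_cancel_left_of_invertible (A 0) X, h, Matrix.mul_zero],
      fun h => by rw [h, Matrix.mul_zero]⟩
  rw [hS.tsum_eq, Matrix.forall_integral_mul_exp_add_eq_iff Y S hΛ, MMfun_eq_mul_sub hBc hS hsumM,
    hA0_mul_eq_zero, sub_eq_zero, eq_comm, Matrix.mul_inv_eq_iff_eq_mul_of_invertible]
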